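/- In an N-horizon deterministic chain MDP where a reward of 1 is given only at the final transition and 0 elsewhere, one-step value iteration starting from Q₀ = 0 requires exactly N iterations for the value at the initial state to become positive, whereas the greedy multi-step operator with a policy set containing the optimal policy and maximal step N makes it positive in one iteration. -/

import Mathlib

open Finset Filter Topology

/-!
With a single action the optimality backup is policy evaluation, and `k` evaluation backups
from `Q₀ = 0` compute the discounted return of the first `k` steps. Along the chain the only
reward is collected at step `N - 1`, so this return is `0` for `k < N` and `γ ^ (N - 1)` from
`k = N` on; the greedy operator's `N`-step branch sees it after one application.
-/

/-- Deterministic Bellman optimality operator for a deterministic MDP with transition f. -/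
noncomputable def dbOpt {S A : Type*} [Fintype A] [Nonempty A]
    (f : S × A → S) (r : S × A → ℝ) (γ : ℝ) (Q : S × A → ℝ) : S × A → ℝ :=
  fun p => r p + γ * univ.sup' univ_nonempty fun a' => Q (f p, a')

/-- Deterministic Bellman expectation operator for a deterministic policy π. -/
def dbExp {S A : Type*} (f : S × A → S) (r : S × A → ℝ) (γ : ℝ)
    (π : S → A) (Q : S × A → ℝ) : S × A → ℝ :=
  fun p => r p + γ * Q (f p, π (f p))

/-- Greedy Multi-Step operator for a deterministic MDP:
    Ĝ Q = max_{π ∈ Π̂} max_{1 ≤ n ≤ N} (B^π)^{n-1} B Q (componentwise). -/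
noncomputable def dgOp {S A : Type*} [Fintype A] [Nonempty A]
    (f : S × A → S) (r : S × A → ℝ) (γ : ℝ)
    {ι : Type*} [Fintype ι] [Nonempty ι] (pol : ι → S → A)
    (N : ℕ) (hN : 1 ≤ N) (Q : S × A → ℝ) : S × A → ℝ :=
  fun p => univ.sup' univ_nonempty fun i =>
    (Icc 1 N).sup' (nonempty_Icc.mpr hN) fun n =>
      ((dbExp f r γ (pol i))^[n - 1] (dbOpt f r γ Q)) p

def dbNext {S A : Type*} (f : S × A → S) (π : S → A) (p : S × A) : S × A :=
  (f p, π (f p))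

lemma dbOpt_eq_dbExp {S A : Type*} [Fintype A] [Nonempty A] [Subsingleton A]
    (f : S × A → S) (r : S × A → ℝ) (γ : ℝ) (π : S → A) :
    dbOpt f r γ = dbExp f r γ π := by
  funext Q p
  simp only [dbOpt, dbExp, Subsingleton.elim _ (π (f p)), sup'_const]

lemma dbExp_iterate_apply {S A : Type*} (f : S × A → S) (r : S × A → ℝ) (γ : ℝ) (π : S → A)
    (k : ℕ) (Q : S × A → ℝ) (p : S × A) :
    ((dbExp f r γ π)^[k] Q) p =
      ∑ j ∈ range k, γ ^ j * r ((dbNext f π)^[j] p) + γ ^ k * Q ((dbNext f π)^[k] p) := by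
  induction k generalizing Q with
  | zero => simp
  | succ k ih =>
    rw [Function.iterate_succ_apply, ih, sum_range_succ, Function.iterate_succ_apply']
    simp only [dbExp, dbNext]
    ring

lemma dgOp_const_apply {S A ι : Type*} [Fintype A] [Nonempty A] [Subsingleton A]
    [Fintype ι] [Nonempty ι] (f : S × A → S) (r : S × A → ℝ) (γ : ℝ) (π : S → A)
    (N : ℕ) (hN : 1 ≤ N) (Q : S × A → ℝ) (p : S × A) :
    dgOp f r γ (fun _ : ι => π) N hN Q p =
      (Icc 1 N).sup' (nonempty_Icc.mpr hN) fun n => ((dbExp f r γ π)^[n] Q) p := by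
  refine (sup'_const _ _).trans (sup'_congr _ rfl fun n hn => ?_)
  obtain ⟨m, rfl⟩ := Nat.exists_eq_add_of_le' (mem_Icc.mp hn).1
  rw [dbOpt_eq_dbExp f r γ π, Nat.add_sub_cancel, ← Function.iterate_succ_apply]

section Chain

variable (N : ℕ)

def chainMove : Fin (N + 1) × Unit → Fin (N + 1) :=
  fun p => ⟨min ((p.1 : ℕ) + 1) N, Nat.lt_succ_of_le (min_le_right _ _)⟩

def chainReward : Fin (N + 1) × Unit → ℝ :=
  fun p => if (p.1 : ℕ) = N - 1 then 1 else 0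

lemma dbNext_chain_iterate_fst (j : ℕ) :
    (((dbNext (chainMove N) fun _ => ())^[j] (⟨0, N.succ_pos⟩, ())).1 : ℕ) = min j N := by
  induction j with
  | zero => simp
  | succ j ih =>
    rw [Function.iterate_succ_apply', dbNext, chainMove]
    simp only [ih]
    omega

lemma dbExp_chain_iterate_apply (hN : 1 ≤ N) (γ : ℝ) (k : ℕ) :
    ((dbExp (chainMove N) (chainReward N) γ fun _ => ())^[k] 0) (⟨0, N.succ_pos⟩, ()) =
      if N - 1 < k then γ ^ (N - 1) else 0 := by
  have hreward (j : ℕ) :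
      chainReward N ((dbNext (chainMove N) fun _ => ())^[j] (⟨0, N.succ_pos⟩, ())) =
        if N - 1 = j then 1 else 0 := by
    simp only [chainReward, dbNext_chain_iterate_fst]
    congr 1
    apply propext
    omega
  simp only [dbExp_iterate_apply, hreward, Pi.zero_apply, mul_zero, add_zero, mul_ite, mul_one,
    sum_ite_eq, mem_range]

end Chain

/-- in an N-horizon deterministic chain MDP (states s₀ → s₁ → ⋯ → s_N,
    one action, reward 1 only on the final transition from s_{N-1}), one-step value
    iteration from Q₀ = 0 needs exactly N iterations to make the value at s₀ positive,
    while the greedy multi-step operator (policy set containing the optimal policy,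
    maximal step N) makes it γ^{N-1} > 0 in a single iteration. -/
theorem chain_mdp_one_step_vs_greedy
    (N : ℕ) (hN : 1 ≤ N) (γ : ℝ) (hγ0 : 0 < γ) :
    let f : Fin (N + 1) × Unit → Fin (N + 1) :=
      fun p => ⟨min ((p.1 : ℕ) + 1) N, by omega⟩
    let r : Fin (N + 1) × Unit → ℝ :=
      fun p => if (p.1 : ℕ) = N - 1 then 1 else 0
    let s0 : Fin (N + 1) × Unit := (⟨0, by omega⟩, ())
    (∀ k < N, ((dbOpt f r γ)^[k] 0) s0 = 0) ∧
      0 < ((dbOpt f r γ)^[N] 0) s0 ∧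
      dgOp f r γ (fun _ : Unit => fun _ => ()) N hN 0 s0 = γ ^ (N - 1) := by
  intro f r s0
  have hvalue (k : ℕ) : ((dbOpt f r γ)^[k] 0) s0 = if N - 1 < k then γ ^ (N - 1) else 0 := by
    rw [dbOpt_eq_dbExp f r γ fun _ => ()]
    exact dbExp_chain_iterate_apply N hN γ k
  refine ⟨fun k hk => by rw [hvalue, if_neg (by omega)], ?_, ?_⟩
  · rw [hvalue, if_pos (by omega)]
    positivity
  rw [dgOp_const_apply]
  simp only [← dbOpt_eq_dbExp f r γ, hvalue]
  refine le_antisymm (sup'_le _ _ fun n _ => ?_) (le_sup'_of_le _ (right_mem_Icc.mpr hN) ?_)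
  · split_ifs
    exacts [le_rfl, by positivity]
  · rw [if_pos (by omega)]
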